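/- arXiv:1906.09465 — 5 statements merged into one kernel-verified Lean document; each statement's English description precedes it below -/
import Mathlib

section
/- Every function f : F^n → F either has no 1-canalizing variables, or can be written in layered canalizing form: there exist r ≥ 1, a partition of the n variables into disjoint layer blocks L_1, …, L_r of sizes k_1, …, k_r together with the remaining n − d variables (d = k_1 + ⋯ + k_r), nonempty proper canalizing input sets S_{i,j} ⊆ F, constants B_1, …, B_r ∈ F with B_r ≠ 0, and a core function P_C of the remaining n − d variables having no 1-canalizing variables, such that f(x) = M_1(M_2(⋯(M_{r−1}(M_r · P_C + B_r) + B_{r−1})⋯) + B_2) + B_1, where M_i = ∏_{j=1}^{k_i} Q̃_{S_{i,j}}(x_{i,j}) is the product of complement indicators over the variables in layer L_i, and each variable appears in exactly one of M_1, …, M_r, P_C. -/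
open Finset

/-- Indicator function of the complement of `S`: `Qt S x = 1` if `x ∉ S`, `0` if `x ∈ S`. -/
def Qt {F : Type*} [Fintype F] [DecidableEq F] [Zero F] [One F] (S : Finset F) (x : F) : F :=
  if x ∈ S then 0 else 1

/-- `g` actually depends on (is essential in) its `i`-th variable. -/
def DependsOnVar {F : Type*} (n : ℕ) (g : (Fin n → F) → F) (i : Fin n) : Prop :=
  ∃ x y : Fin n → F, (∀ j, j ≠ i → x j = y j) ∧ g x ≠ g y

/-- `g` is canalizing in its `i`-th variable with canalizing input set `S`
(a nonempty proper subset of `F`) and canalizing output `b`. -/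
def Canalizing {F : Type*} [Fintype F] [DecidableEq F] (n : ℕ) (g : (Fin n → F) → F)
    (i : Fin n) (S : Finset F) (b : F) : Prop :=
  S.Nonempty ∧ S ≠ Finset.univ ∧ ∀ x : Fin n → F, x i ∈ S → g x = b

/-- `f` is 1-canalizing in its `i`-th variable with canalizing input set `S`
(a nonempty proper subset of `F`) and canalizing output `b`: `f = b` whenever `x i ∈ S`,
and on `x i ∉ S` the value of `f` is given by a single function of the remaining variables
which is not identically `b`. -/
def OneCanalizing {F : Type*} [Fintype F] [DecidableEq F] (n : ℕ) (f : (Fin n → F) → F)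
    (i : Fin n) (S : Finset F) (b : F) : Prop :=
  S.Nonempty ∧ S ≠ Finset.univ ∧
  (∀ x : Fin n → F, x i ∈ S → f x = b) ∧
  (∀ x y : Fin n → F, x i ∉ S → y i ∉ S → (∀ j, j ≠ i → x j = y j) → f x = f y) ∧
  (∃ x : Fin n → F, x i ∉ S ∧ f x ≠ b)

/-- Nested evaluation `M₁(M₂(⋯(M_r · P + B_r)⋯) + B₂) + B₁`. -/
def nestEval {F : Type*} [Mul F] [Add F] : List (F × F) → F → F
  | [], P => P
  | (m, b) :: t, P => m * nestEval t P + b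

/-- Layered canalizing form data for a function of `n` variables with `r ≥ 1` layers:
pairwise disjoint layer blocks, nonempty proper canalizing input sets for the
layer variables, layer constants `B` with the last one nonzero, and a core function
`P_C` of the remaining variables having no 1-canalizing variables. -/
structure LayeredForm (F : Type*) [Field F] [Fintype F] [DecidableEq F] (n r : ℕ) where
  hr : 0 < r
  layer : Fin r → Finset (Fin n)
  disj : ∀ i j : Fin r, i ≠ j → Disjoint (layer i) (layer j)
  S : Fin n → Finset F
  Sne : ∀ i : Fin r, ∀ v ∈ layer i, (S v).Nonempty
  Spr : ∀ i : Fin r, ∀ v ∈ layer i, S v ≠ Finset.univ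
  B : Fin r → F
  Blast : B ⟨r - 1, Nat.sub_lt hr Nat.one_pos⟩ ≠ 0
  PC : (Fin n → F) → F
  PCvars : ∀ i : Fin r, ∀ v ∈ layer i, ¬ DependsOnVar n PC v
  PCnc : ¬ ∃ (v : Fin n) (S' : Finset F) (b : F), OneCanalizing n PC v S' b

/-- The product `M_i = ∏_{v ∈ L_i} Q̃_{S_v}(x_v)` over the `i`-th layer. -/
def LayeredForm.M {F : Type*} [Field F] [Fintype F] [DecidableEq F] {n r : ℕ}
    (L : LayeredForm F n r) (i : Fin r) (x : Fin n → F) : F :=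
  ∏ v ∈ L.layer i, Qt (L.S v) (x v)

/-- The function determined by a layered canalizing form:
`f(x) = M₁(M₂(⋯(M_r · P_C + B_r)⋯) + B₂) + B₁`. -/
def LayeredForm.eval {F : Type*} [Field F] [Fintype F] [DecidableEq F] {n r : ℕ}
    (L : LayeredForm F n r) (x : Fin n → F) : F :=
  nestEval (List.ofFn fun i => (L.M i x, L.B i)) (L.PC x)

/-- The number of state-space transitions changed when the input `s` of `f`
is replaced by the constant `a` (edge deletion when `a = 0`). -/
def chCount {F : Type*} [Fintype F] [DecidableEq F] {n : ℕ}
    (f : (Fin n → F) → F) (s : Fin n) (a : F) : ℕ :=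
  (Finset.univ.filter fun x : Fin n → F => f (Function.update x s a) ≠ f x).card
/-!
If `f` is 1-canalizing in `xᵢ` with input set `S` and output `b`, pick `c ∉ S`; then
`f = Q̃_S(xᵢ) · g + b` with `g x = f (x[i ↦ c]) - b`. The function `g` no longer depends on `xᵢ`
and depends on no variable `f` ignores, so peeling off canalizing variables terminates, and a
layered form of `g` whose layer and core variables are essential for `g` extends by one layer to
one of `f`. A remainder with no 1-canalizing variable becomes the core, written as
`1 · (g - 1) + 1` so that the last layer constant is nonzero.
-/

section EssentialVars

variable {F : Type*} {n : ℕ}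

def essentialVars (g : (Fin n → F) → F) : Set (Fin n) :=
  {v | DependsOnVar n g v}

@[simp]
theorem mem_essentialVars {g : (Fin n → F) → F} {v : Fin n} :
    v ∈ essentialVars g ↔ DependsOnVar n g v :=
  Iff.rfl

theorem essentialVars_comp_subset (h : F → F) (g : (Fin n → F) → F) :
    essentialVars (fun x => h (g x)) ⊆ essentialVars g := by
  rintro v ⟨x, y, hxy, hne⟩
  exact ⟨x, y, hxy, fun he => hne (congrArg h he)⟩

theorem update_eq_update_of_eq_of_ne {x y : Fin n → F} {i : Fin n}
    (hxy : ∀ j, j ≠ i → x j = y j) (c : F) :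
    Function.update x i c = Function.update y i c := by
  funext j
  by_cases hj : j = i
  · subst hj; simp
  · simp [Function.update_of_ne hj, hxy j hj]

theorem not_dependsOnVar_comp_update (f : (Fin n → F) → F) (i : Fin n) (c : F) :
    ¬ DependsOnVar n (fun x => f (Function.update x i c)) i := by
  rintro ⟨x, y, hxy, hne⟩
  exact hne (congrArg f (update_eq_update_of_eq_of_ne hxy c))

theorem essentialVars_comp_update_subset (f : (Fin n → F) → F) (i : Fin n) (c : F) :
    essentialVars (fun x => f (Function.update x i c)) ⊆ essentialVars f \ {i} := by
  rintro v ⟨x, y, hxy, hne⟩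
  have hvi : v ≠ i := by
    rintro rfl
    exact not_dependsOnVar_comp_update f v c ⟨x, y, hxy, hne⟩
  refine ⟨⟨Function.update x i c, Function.update y i c, fun j hj => ?_, hne⟩, hvi⟩
  by_cases hji : j = i
  · subst hji; simp
  · simp [Function.update_of_ne hji, hxy j hj]

end EssentialVars

section OneCanalizing

variable {F : Type*} [Fintype F] [DecidableEq F] {n : ℕ}

theorem OneCanalizing.dependsOnVar {f : (Fin n → F) → F} {i : Fin n} {S : Finset F} {b : F}
    (h : OneCanalizing n f i S b) : DependsOnVar n f i := by
  obtain ⟨⟨s, hs⟩, -, hcan, -, x, -, hxb⟩ := h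
  refine ⟨x, Function.update x i s, fun j hj => (Function.update_of_ne hj s x).symm, ?_⟩
  rwa [hcan (Function.update x i s) (by simpa using hs)]

theorem OneCanalizing.of_sub_const [AddGroup F] {g : (Fin n → F) → F} {i : Fin n}
    {S : Finset F} {b c : F} (h : OneCanalizing n (fun x => g x - c) i S b) :
    OneCanalizing n g i S (b + c) := by
  obtain ⟨hne, hpr, hcan, hfac, x, hx, hxb⟩ := h
  exact ⟨hne, hpr, fun x hx => eq_add_of_sub_eq (hcan x hx),
    fun x y hx hy hxy => sub_left_inj.mp (hfac x y hx hy hxy),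
    x, hx, fun he => hxb (sub_eq_of_eq_add he)⟩

theorem OneCanalizing.apply_eq_qt_mul_add [Ring F] {f : (Fin n → F) → F} {i : Fin n}
    {S : Finset F} {b c : F} (h : OneCanalizing n f i S b) (hc : c ∉ S) (x : Fin n → F) :
    f x = Qt S (x i) * (f (Function.update x i c) - b) + b := by
  obtain ⟨-, -, hcan, hfac, -⟩ := h
  by_cases hx : x i ∈ S
  · simp [Qt, hx, hcan x hx]
  · have hfx : f x = f (Function.update x i c) :=
      hfac x _ hx (by simpa using hc) fun j hj => (Function.update_of_ne hj c x).symm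
    simp [Qt, hx, ← hfx]

end OneCanalizing

namespace LayeredForm

variable {F : Type*} [Field F] [Fintype F] [DecidableEq F] {n r : ℕ}

def ofCore (g : (Fin n → F) → F)
    (hg : ¬ ∃ (i : Fin n) (S : Finset F) (b : F), OneCanalizing n g i S b) :
    LayeredForm F n 1 where
  hr := one_pos
  layer _ := ∅
  disj i j hij := absurd (Subsingleton.elim i j) hij
  S _ := ∅
  Sne := by simp
  Spr := by simp
  B _ := 1
  Blast := one_ne_zero
  PC x := g x - 1
  PCvars := by simp
  PCnc := fun ⟨i, S, b, h⟩ => hg ⟨i, S, b + 1, h.of_sub_const⟩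

theorem eval_ofCore (g : (Fin n → F) → F)
    (hg : ¬ ∃ (i : Fin n) (S : Finset F) (b : F), OneCanalizing n g i S b) : (ofCore g hg).eval = g := by
  funext x
  simp [eval, M, nestEval, ofCore]

theorem ne_of_mem_layer {L : LayeredForm F n r} {i : Fin n} (hi : ∀ k, i ∉ L.layer k)
    {k : Fin r} {v : Fin n} (hv : v ∈ L.layer k) : v ≠ i := by
  rintro rfl
  exact hi k hv

def cons (L : LayeredForm F n r) (i : Fin n) (S : Finset F) (b : F) (hS : S.Nonempty)
    (hSu : S ≠ univ) (hi : ∀ k, i ∉ L.layer k) (hPC : ¬ DependsOnVar n L.PC i) :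
    LayeredForm F n (r + 1) where
  hr := r.succ_pos
  layer := Fin.cons {i} L.layer
  disj := by
    intro k l hkl
    induction k using Fin.cases <;> induction l using Fin.cases
    · exact absurd rfl hkl
    · simpa using hi _
    · simpa using hi _
    · simpa using L.disj _ _ (fun h => hkl (congrArg Fin.succ h))
  S := Function.update L.S i S
  Sne := by
    intro k v hv
    induction k using Fin.cases
    · obtain rfl : v = i := by simpa using hv
      simpa using hS
    · simpa [Function.update_of_ne (ne_of_mem_layer hi hv)] using L.Sne _ v hv
  Spr := by
    intro k v hv
    induction k using Fin.cases
    · obtain rfl : v = i := by simpa using hv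
      simpa using hSu
    · simpa [Function.update_of_ne (ne_of_mem_layer hi hv)] using L.Spr _ v hv
  B := Fin.cons b L.B
  Blast := by
    have hlast : (⟨r + 1 - 1, Nat.sub_lt r.succ_pos Nat.one_pos⟩ : Fin (r + 1)) =
        Fin.succ ⟨r - 1, Nat.sub_lt L.hr Nat.one_pos⟩ := by
      have := L.hr
      ext
      simp only [Fin.val_succ]
      omega
    rw [hlast, Fin.cons_succ]
    exact L.Blast
  PC := L.PC
  PCvars := by
    intro k v hv
    induction k using Fin.cases
    · obtain rfl : v = i := by simpa using hv
      exact hPC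
    · exact L.PCvars _ v hv
  PCnc := L.PCnc

section Cons

variable (L : LayeredForm F n r) (i : Fin n) (S : Finset F) (b : F) (hS : S.Nonempty)
  (hSu : S ≠ univ) (hi : ∀ k, i ∉ L.layer k) (hPC : ¬ DependsOnVar n L.PC i)

@[simp]
theorem cons_layer_zero : (L.cons i S b hS hSu hi hPC).layer 0 = {i} :=
  rfl

@[simp]
theorem cons_layer_succ (k : Fin r) : (L.cons i S b hS hSu hi hPC).layer k.succ = L.layer k :=
  rfl

@[simp]
theorem cons_PC : (L.cons i S b hS hSu hi hPC).PC = L.PC :=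
  rfl

theorem eval_cons (x : Fin n → F) :
    (L.cons i S b hS hSu hi hPC).eval x = Qt S (x i) * L.eval x + b := by
  have hM0 : (L.cons i S b hS hSu hi hPC).M 0 x = Qt S (x i) := by
    simp [M, cons]
  have hM : ∀ k, (L.cons i S b hS hSu hi hPC).M k.succ x = L.M k x := fun k =>
    prod_congr rfl fun v hv => by
      simp [cons, Function.update_of_ne (ne_of_mem_layer hi hv)]
  simp only [eval, List.ofFn_succ, nestEval, hM0, hM]
  rfl

end Cons

end LayeredForm

variable {F : Type*} [Field F] [Fintype F] [DecidableEq F] {n : ℕ} in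
theorem exists_layeredForm_eq (f : (Fin n → F) → F) :
    ∃ (r : ℕ) (L : LayeredForm F n r), f = L.eval ∧
      (∀ k, ↑(L.layer k) ⊆ essentialVars f) ∧ essentialVars L.PC ⊆ essentialVars f := by
  by_cases hf : ∃ (i : Fin n) (S : Finset F) (b : F), OneCanalizing n f i S b
  · obtain ⟨i, S, b, hcan⟩ := hf
    obtain ⟨c, hc⟩ : ∃ c, c ∉ S := by simpa [eq_univ_iff_forall] using hcan.2.1
    set g : (Fin n → F) → F := fun x => f (Function.update x i c) - b
    have hg : essentialVars g ⊆ essentialVars f \ {i} :=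
      (essentialVars_comp_subset (· - b) _).trans (essentialVars_comp_update_subset f i c)
    have hgf : essentialVars g ⊆ essentialVars f := hg.trans Set.sdiff_subset
    have hgi : i ∉ essentialVars g := fun h => (hg h).2 rfl
    have hlt : (essentialVars g).ncard < (essentialVars f).ncard :=
      Set.ncard_lt_ncard (hg.trans_ssubset (Set.sdiff_singleton_ssubset.mpr hcan.dependsOnVar))
    obtain ⟨r, L, hgL, hlay, hcore⟩ := exists_layeredForm_eq g
    refine ⟨r + 1, L.cons i S b hcan.1 hcan.2.1 (fun k hk => hgi (hlay k hk))
      (fun h => hgi (hcore h)), ?_, ?_, by simpa using hcore.trans hgf⟩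
    · funext x
      rw [L.eval_cons, ← hgL, hcan.apply_eq_qt_mul_add hc x]
    · intro k
      induction k using Fin.cases
      · simpa using hcan.dependsOnVar
      · simpa using (hlay _).trans hgf
  · exact ⟨1, .ofCore f hf, (LayeredForm.eval_ofCore f hf).symm,
      fun _ => by simp [LayeredForm.ofCore], essentialVars_comp_subset (· - 1) f⟩
termination_by (essentialVars f).ncard

/-- Every function either has no 1-canalizing variables, or can be
written in layered canalizing form. -/
theorem stmt0 {F : Type*} [Field F] [Fintype F] [DecidableEq F] (n : ℕ)
    (f : (Fin n → F) → F) :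
    (¬ ∃ (i : Fin n) (S : Finset F) (b : F), OneCanalizing n f i S b) ∨
      ∃ (r : ℕ) (L : LayeredForm F n r), f = L.eval := by
  obtain ⟨r, L, hfL, -⟩ := exists_layeredForm_eq f
  exact Or.inr ⟨r, L, hfL⟩
end

section
/- Let f : F^n → F be 1-canalizing in each of the distinct variables x_{i_1}, …, x_{i_k} (k ≥ 1), with canalizing input sets S_1, …, S_k and canalizing outputs b_1, …, b_k respectively, where n ≥ 2 or k < n so that the canalizing regions overlap appropriately. Then b_1 = b_2 = ⋯ = b_k =: B, and there exists a function g of the remaining n − k variables such that f(x) = (∏_{j=1}^{k} Q̃_{S_j}(x_{i_j})) · g(x_{other}) + B for all x ∈ F^n. -/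
open Finset

/-!
Two canalizing variables have the same output, since an input lying in both canalizing sets is
sent to both. Where no canalizing variable lies in its canalizing set, moving one of them within
the complement of its set does not change `f`; so `f x` is the value of `f` at the input obtained
from `x` by resetting every canalizing variable to a fixed value outside its set, and this value
minus `B` is `g x`. Elsewhere both sides equal `B`, because the product of the `Q̃` vanishes.
-/

theorem apply_eq_apply_of_coordwise_invariant {ι α β : Type*} [DecidableEq ι]
    (f : (ι → α) → β) (A : ι → Set α) (T : Finset ι)
    (hf : ∀ i ∈ T, ∀ x y : ι → α, x i ∈ A i → y i ∈ A i → (∀ j, j ≠ i → x j = y j) → f x = f y)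
    {x y : ι → α} (hx : ∀ i ∈ T, x i ∈ A i) (hy : ∀ i ∈ T, y i ∈ A i)
    (hxy : ∀ j ∉ T, x j = y j) : f x = f y := by
  induction T using Finset.induction_on generalizing x with
  | empty => exact congrArg f (funext fun j => hxy j (Finset.notMem_empty j))
  | @insert i T hi ih =>
    have hx' : ∀ j ∈ T, Function.update x i (y i) j ∈ A j := fun j hj => by
      rw [Function.update_of_ne (ne_of_mem_of_not_mem hj hi)]
      exact hx j (mem_insert_of_mem hj)
    calc f x = f (Function.update x i (y i)) :=
          hf i (mem_insert_self i T) _ _ (hx i (mem_insert_self i T))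
            (by simpa using hy i (mem_insert_self i T))
            (fun j hj => (Function.update_of_ne hj _ _).symm)
      _ = f y := by
          refine ih (fun j hj => hf j (mem_insert_of_mem hj)) hx'
            (fun j hj => hy j (mem_insert_of_mem hj)) fun j hj => ?_
          rcases eq_or_ne j i with rfl | hji
          · exact Function.update_self _ _ _
          · rw [Function.update_of_ne hji]
            exact hxy j (by simp [hji, hj])

theorem Function.extend_eq_extend_of_eqOn_compl_range {α β γ : Type*} {ι : α → β}
    (hι : Function.Injective ι) (a : α → γ) {x y : β → γ}
    (hxy : ∀ v, (∀ j, ι j ≠ v) → x v = y v) : Function.extend ι a x = Function.extend ι a y :=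
  funext fun v => by
    by_cases hv : ∃ j, ι j = v
    · obtain ⟨j, rfl⟩ := hv
      simp only [hι.extend_apply]
    · simp only [Function.extend_apply' _ _ _ hv]
      exact hxy v (by simpa using hv)

section

variable {F : Type*} [Fintype F] [DecidableEq F] {n : ℕ} {f : (Fin n → F) → F}

theorem Qt_of_mem {S : Finset F} {x : F} [Zero F] [One F] (hx : x ∈ S) : Qt S x = 0 :=
  if_pos hx

theorem Qt_of_notMem {S : Finset F} {x : F} [Zero F] [One F] (hx : x ∉ S) : Qt S x = 1 :=
  if_neg hx

theorem OneCanalizing.canalizing {i : Fin n} {S : Finset F} {b : F}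
    (h : OneCanalizing n f i S b) : Canalizing n f i S b :=
  ⟨h.1, h.2.1, h.2.2.1⟩

theorem Canalizing.output_eq {i i' : Fin n} {S S' : Finset F} {b b' : F}
    (h : Canalizing n f i S b) (h' : Canalizing n f i' S' b') (hii' : i ≠ i') : b = b' := by
  obtain ⟨s, hs⟩ := h.1
  obtain ⟨s', hs'⟩ := h'.1
  let x := Function.update (fun _ => s) i' s'
  have hxi : x i = s := by simp [x, hii']
  have hxi' : x i' = s' := by simp [x]
  rw [← h.2.2 x (hxi ▸ hs), h'.2.2 x (hxi' ▸ hs')]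

theorem OneCanalizing.apply_extend_eq {k : ℕ} {idx : Fin k → Fin n}
    (hinj : Function.Injective idx) {S : Fin k → Finset F} {b : Fin k → F}
    (hcan : ∀ j, OneCanalizing n f (idx j) (S j) (b j)) {a : Fin k → F} (ha : ∀ j, a j ∉ S j)
    {x : Fin n → F} (hx : ∀ j, x (idx j) ∉ S j) : f (Function.extend idx a x) = f x := by
  let A : Fin n → Set F := fun v => {c | ∀ j, idx j = v → c ∉ S j}
  have hA : ∀ j c, c ∈ A (idx j) ↔ c ∉ S j := fun j c =>
    ⟨fun hc => hc j rfl, fun hc j' hj' => hinj hj' ▸ hc⟩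
  refine apply_eq_apply_of_coordwise_invariant f A (univ.image idx) ?_ ?_ ?_ ?_
  · simp only [mem_image, mem_univ, true_and, forall_exists_index, forall_apply_eq_imp_iff, hA]
    exact fun j => (hcan j).2.2.2.1
  · simp [hA, hinj.extend_apply, ha]
  · simp [hA, hx]
  · intro v hv
    exact Function.extend_apply' _ _ _ (by simpa using hv)

theorem OneCanalizing.exists_output_eq [Nonempty F] {k : ℕ} {idx : Fin k → Fin n}
    (hinj : Function.Injective idx) {S : Fin k → Finset F} {b : Fin k → F}
    (hcan : ∀ j, OneCanalizing n f (idx j) (S j) (b j)) : ∃ B, ∀ j, b j = B := by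
  rcases isEmpty_or_nonempty (Fin k) with hk | ⟨⟨j₀⟩⟩
  · exact ⟨Classical.arbitrary F, isEmptyElim⟩
  refine ⟨b j₀, fun j => ?_⟩
  rcases eq_or_ne j j₀ with rfl | hne
  · rfl
  · exact (hcan j).canalizing.output_eq (hcan j₀).canalizing (hinj.ne hne)

end

theorem stmt3_general {F : Type*} [Field F] [Fintype F] [DecidableEq F] (n k : ℕ)
    (f : (Fin n → F) → F) (idx : Fin k → Fin n) (hinj : Function.Injective idx)
    (S : Fin k → Finset F) (b : Fin k → F)
    (hcan : ∀ j : Fin k, OneCanalizing n f (idx j) (S j) (b j)) :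
    ∃ B : F, (∀ j : Fin k, b j = B) ∧
      ∃ g : (Fin n → F) → F,
        (∀ x y : Fin n → F, (∀ v : Fin n, (∀ j : Fin k, idx j ≠ v) → x v = y v) → g x = g y) ∧
        ∀ x : Fin n → F, f x = (∏ j : Fin k, Qt (S j) (x (idx j))) * g x + B := by
  obtain ⟨B, hB⟩ := OneCanalizing.exists_output_eq hinj hcan
  choose a ha using fun j => by simpa [eq_univ_iff_forall] using (hcan j).2.1
  refine ⟨B, hB, fun x => f (Function.extend idx a x) - B, fun x y hxy => ?_, fun x => ?_⟩
  · simp only [Function.extend_eq_extend_of_eqOn_compl_range hinj a hxy]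
  by_cases hx : ∀ j, x (idx j) ∉ S j
  · rw [prod_eq_one fun j _ => Qt_of_notMem (hx j), one_mul]
    beta_reduce
    rw [OneCanalizing.apply_extend_eq hinj hcan ha hx, sub_add_cancel]
  · obtain ⟨j, hj⟩ := not_forall_not.mp hx
    have hQ : Qt (S j) (x (idx j)) = 0 := Qt_of_mem hj
    rw [prod_eq_zero (mem_univ j) hQ, zero_mul, zero_add, (hcan j).2.2.1 x hj, hB j]

/-- If `f` is 1-canalizing in `k` distinct variables, then all the canalizing
outputs coincide with a common value `B`, and `f = (∏ Q̃_{S_j}(x_{i_j})) · g + B` for a single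
function `g` of the remaining variables. -/
theorem stmt3 {F : Type*} [Field F] [Fintype F] [DecidableEq F] (n k : ℕ)
    (hk : 1 ≤ k) (hnk : 2 ≤ n ∨ k < n)
    (f : (Fin n → F) → F) (idx : Fin k → Fin n) (hinj : Function.Injective idx)
    (S : Fin k → Finset F) (b : Fin k → F)
    (hcan : ∀ j : Fin k, OneCanalizing n f (idx j) (S j) (b j)) :
    ∃ B : F, (∀ j : Fin k, b j = B) ∧
      ∃ g : (Fin n → F) → F,
        (∀ x y : Fin n → F, (∀ v : Fin n, (∀ j : Fin k, idx j ≠ v) → x v = y v) → g x = g y) ∧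
        ∀ x : Fin n → F, f x = (∏ j : Fin k, Qt (S j) (x (idx j))) * g x + B :=
  stmt3_general n k f idx hinj S b hcan
end

section
/- Let f : F^n → F be in layered canalizing form with r layers of sizes k_1, …, k_r, and suppose all canalizing input sets S_{i,j} are equal to one common set S ⊆ F with 0 ∈ S. If the variable x_s lies in the ℓ-th layer (1 ≤ ℓ ≤ r), then the number of transitions changed by deleting x_s satisfies #{x ∈ F^n : f(x_1, …, x_{s−1}, 0, x_{s+1}, …, x_n) ≠ f(x)} ≤ p^{n − (k_1 + ⋯ + k_ℓ)} · (p − |S|)^{k_1 + ⋯ + k_ℓ}. -/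
open Finset

open Finset

/-
If `x_s` lies in layer `ℓ` and some variable `x_v` of a layer `i ≤ ℓ` takes a value in the
canalizing set, then setting `x_s := 0` does not change `f`: either `v = s`, and then `x_s` and
`0` both lie in `S`, so every factor `M_j` keeps its value while `P_C` does not see `x_s`; or
`v ≠ s`, and then `M_i = 0` before and after, so `f` is determined by the layers above `i`,
none of which contains `s`. Hence a changed transition needs `x_v ∉ S` for all
`k_1 + ⋯ + k_ℓ` variables of the first `ℓ` layers, and there are
`p^{n - (k_1 + ⋯ + k_ℓ)} (p - |S|)^{k_1 + ⋯ + k_ℓ}` such states.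
-/

theorem nestEval_eq_of_getElem_fst_eq_zero {F : Type*} [NonUnitalNonAssocSemiring F]
    (l : List (F × F)) (i : ℕ) (hi : i < l.length) (h : l[i].1 = 0) (P : F) :
    nestEval l P = nestEval (l.take i) l[i].2 := by
  induction l generalizing i with
  | nil => simp at hi
  | cons a t ih =>
    obtain ⟨m, b⟩ := a
    cases i with
    | zero => simp_all [nestEval]
    | succ i => simp only [nestEval, List.take_succ_cons, List.getElem_cons_succ, ih i _ h]

theorem Fintype.card_piFinset_ite_mem {ι α : Type*} [Fintype ι] [DecidableEq ι]
    [Fintype α] [DecidableEq α] (T : Finset ι) (A : Finset α) :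
    #(Fintype.piFinset fun i => if i ∈ T then A else univ) =
      Fintype.card α ^ (Fintype.card ι - #T) * #A ^ #T := by
  simp only [Fintype.card_piFinset, apply_ite Finset.card, card_univ]
  rw [prod_ite, prod_const, prod_const, mul_comm]
  congr 2
  · rw [filter_not, filter_mem_eq_inter, univ_inter, card_sdiff_of_subset (subset_univ T),
      card_univ]
  · rw [filter_mem_eq_inter, univ_inter]

namespace LayeredForm

variable {F : Type*} [Field F] [Fintype F] [DecidableEq F] {n r : ℕ} (L : LayeredForm F n r)

theorem M_eq_zero_of_mem {i : Fin r} {v : Fin n} (hv : v ∈ L.layer i) {x : Fin n → F}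
    (hxv : x v ∈ L.S v) : L.M i x = 0 :=
  prod_eq_zero hv (if_pos hxv)

theorem M_update_of_notMem {j : Fin r} {s : Fin n} (hs : s ∉ L.layer j) (x : Fin n → F)
    (a : F) : L.M j (Function.update x s a) = L.M j x :=
  prod_congr rfl fun _ hw => by rw [Function.update_of_ne (ne_of_mem_of_not_mem hw hs)]

theorem notMem_layer_of_ne {i j : Fin r} (hij : i ≠ j) {s : Fin n} (hs : s ∈ L.layer i) :
    s ∉ L.layer j :=
  disjoint_left.mp (L.disj i j hij) hs

theorem eval_eq_of_M_eq_zero {x y : Fin n → F} (i : Fin r) (hx : L.M i x = 0)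
    (hy : L.M i y = 0) (hlt : ∀ j < i, L.M j x = L.M j y) : L.eval x = L.eval y := by
  unfold eval
  rw [nestEval_eq_of_getElem_fst_eq_zero (List.ofFn fun j => (L.M j x, L.B j)) i (by simp)
      (by simpa using hx),
    nestEval_eq_of_getElem_fst_eq_zero (List.ofFn fun j => (L.M j y, L.B j)) i (by simp)
      (by simpa using hy)]
  congr 1
  · refine List.ext_getElem (by simp) fun m hmx _ => ?_
    have hmi : m < i := by simpa using hmx
    simp only [List.getElem_take, List.getElem_ofFn]
    rw [hlt ⟨m, by omega⟩ hmi]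
  · simp

theorem eval_update_of_mem_S {ℓ : Fin r} {s : Fin n} (hs : s ∈ L.layer ℓ) {a : F}
    (ha : a ∈ L.S s) {x : Fin n → F} (hxs : x s ∈ L.S s) :
    L.eval (Function.update x s a) = L.eval x := by
  have hM : ∀ j, L.M j (Function.update x s a) = L.M j x := by
    intro j
    by_cases hj : j = ℓ
    · subst hj
      rw [L.M_eq_zero_of_mem hs (by simpa using ha), L.M_eq_zero_of_mem hs hxs]
    · exact L.M_update_of_notMem (L.notMem_layer_of_ne (Ne.symm hj) hs) x a
  have hPC : L.PC (Function.update x s a) = L.PC x := by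
    by_contra hne
    exact L.PCvars ℓ s hs ⟨_, x, fun j hj => Function.update_of_ne hj _ _, hne⟩
  simp only [eval, hM, hPC]

theorem eval_update_of_mem_S_of_le {ℓ : Fin r} {s : Fin n} (hs : s ∈ L.layer ℓ) {a : F}
    (ha : a ∈ L.S s) {x : Fin n → F} {i : Fin r} (hiℓ : i ≤ ℓ) {v : Fin n}
    (hv : v ∈ L.layer i) (hxv : x v ∈ L.S v) :
    L.eval (Function.update x s a) = L.eval x := by
  by_cases hvs : v = s
  · subst hvs
    exact L.eval_update_of_mem_S hs ha hxv
  · refine L.eval_eq_of_M_eq_zero i (L.M_eq_zero_of_mem hv ?_) (L.M_eq_zero_of_mem hv hxv)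
      fun j hj => L.M_update_of_notMem (L.notMem_layer_of_ne (hj.trans_le hiℓ).ne' hs) x a
    rwa [Function.update_of_ne hvs]

end LayeredForm

/-- Edge-deletion bound when all canalizing input sets equal a common
set `S` with `0 ∈ S`. -/
theorem stmt4 {F : Type*} [Field F] [Fintype F] [DecidableEq F] {n r : ℕ}
    (f : (Fin n → F) → F) (L : LayeredForm F n r) (hf : f = L.eval)
    (S : Finset F) (hS : ∀ i : Fin r, ∀ v ∈ L.layer i, L.S v = S) (h0 : (0 : F) ∈ S)
    (ℓ : Fin r) (s : Fin n) (hs : s ∈ L.layer ℓ) :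
    chCount f s 0 ≤
      Fintype.card F ^ (n - ∑ i ∈ Finset.univ.filter (fun i : Fin r => i ≤ ℓ), (L.layer i).card) *
        (Fintype.card F - S.card) ^
          (∑ i ∈ Finset.univ.filter (fun i : Fin r => i ≤ ℓ), (L.layer i).card) := by
  set T := (univ.filter fun i : Fin r => i ≤ ℓ).biUnion L.layer
  have hT : #T = ∑ i ∈ univ.filter (fun i : Fin r => i ≤ ℓ), #(L.layer i) :=
    card_biUnion fun i _ j _ hij => L.disj i j hij
  have hchanged : (univ.filter fun x : Fin n → F => f (Function.update x s 0) ≠ f x) ⊆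
      Fintype.piFinset fun v => if v ∈ T then Sᶜ else univ := by
    intro x hx
    refine Fintype.mem_piFinset.mpr fun v => ?_
    split_ifs with hvT
    · obtain ⟨i, hiℓ, hv⟩ := mem_biUnion.mp hvT
      refine mem_compl.mpr fun hxv => (mem_filter.mp hx).2 ?_
      rw [hf]
      exact L.eval_update_of_mem_S_of_le hs (hS ℓ s hs ▸ h0) (mem_filter.mp hiℓ).2 hv
        (hS i v hv ▸ hxv)
    · exact mem_univ _
  calc chCount f s 0 ≤ _ := card_le_card hchanged
    _ = _ := by rw [Fintype.card_piFinset_ite_mem, Fintype.card_fin, hT, card_compl]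
end

section
/- Let f : F^n → F be in layered canalizing form with r layers of sizes k_1, …, k_r, canalizing depth d = k_1 + ⋯ + k_r, and canalizing input sets S_{i,j}, where the core function P_C has no canalizing variables. If x_s is one of the n − d remaining variables in the support of P_C, then the number of transitions changed by deleting x_s satisfies #{x ∈ F^n : f(x_1, …, x_{s−1}, 0, x_{s+1}, …, x_n) ≠ f(x)} ≤ p^{n − d − 1} · (∏_{i=1}^{r} ∏_{j=1}^{k_i} (p − |S_{i,j}|)) · (p − 1). -/
open Finset

/-!
Deleting a core variable `x_s` leaves every layer product `M_i` unchanged, so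
`f(x) - f(x[s ↦ 0]) = (∏ M_i(x)) · (P_C(x) - P_C(x[s ↦ 0]))`. A changed transition therefore
needs `x_s ≠ 0` and `M_i(x) ≠ 0` for every layer, i.e. `x_v ∉ S_v` for every layer variable `v`;
the bound counts the points of this box.
-/

theorem Qt_ne_zero_iff {F : Type*} [Fintype F] [DecidableEq F] [Zero F] [One F] [NeZero (1 : F)]
    {S : Finset F} {a : F} : Qt S a ≠ 0 ↔ a ∉ S := by
  unfold Qt
  split_ifs with h <;> simp [h]

theorem nestEval_sub_nestEval {R : Type*} [Ring R] (l : List (R × R)) (P Q : R) :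
    nestEval l P - nestEval l Q = (l.map Prod.fst).prod * (P - Q) := by
  induction l with
  | nil => simp [nestEval]
  | cons h t ih =>
    obtain ⟨m, b⟩ := h
    simp only [nestEval, List.map_cons, List.prod_cons, add_sub_add_right_eq_sub, ← mul_sub, ih,
      mul_assoc]

namespace LayeredForm

variable {F : Type*} [Field F] [Fintype F] [DecidableEq F] {n r : ℕ} (L : LayeredForm F n r)

def layerVars : Finset (Fin n) :=
  univ.biUnion L.layer

theorem card_layerVars : L.layerVars.card = ∑ i, (L.layer i).card :=
  card_biUnion fun i _ j _ hij => L.disj i j hij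

theorem notMem_layerVars_of_dependsOnVar {v : Fin n} (hv : DependsOnVar n L.PC v) :
    v ∉ L.layerVars := by
  simp only [layerVars, mem_biUnion, mem_univ, true_and, not_exists]
  exact fun i hi => L.PCvars i v hi hv

theorem M_ne_zero_iff {i : Fin r} {x : Fin n → F} :
    L.M i x ≠ 0 ↔ ∀ v ∈ L.layer i, x v ∉ L.S v := by
  simp only [M, prod_ne_zero_iff, Qt_ne_zero_iff]

theorem eval_sub_eval {x y : Fin n → F} (h : ∀ v ∈ L.layerVars, x v = y v) :
    L.eval x - L.eval y = (∏ i, L.M i x) * (L.PC x - L.PC y) := by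
  have hM : ∀ i, L.M i y = L.M i x := fun i =>
    prod_congr rfl fun v hv => by rw [h v (mem_biUnion.mpr ⟨i, mem_univ i, hv⟩)]
  simp only [eval, hM, nestEval_sub_nestEval, List.map_ofFn, List.prod_ofFn]
  rfl

def deletionBox (s : Fin n) (j : Fin n) : Finset F :=
  if j = s then {0}ᶜ else if j ∈ L.layerVars then (L.S j)ᶜ else univ

theorem changed_subset_deletionBox {s : Fin n} (hs : s ∉ L.layerVars) :
    (univ.filter fun x => L.eval (Function.update x s 0) ≠ L.eval x) ⊆
      Fintype.piFinset (L.deletionBox s) := by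
  intro x hx
  have hne := sub_ne_zero.mpr (Ne.symm (mem_filter.mp hx).2)
  rw [L.eval_sub_eval fun v hv => (Function.update_of_ne (ne_of_mem_of_not_mem hv hs) _ _).symm]
    at hne
  obtain ⟨hM, hPC⟩ := mul_ne_zero_iff.mp hne
  rw [Fintype.mem_piFinset]
  intro j
  unfold deletionBox
  split_ifs with hjs hjv
  · rw [hjs, mem_compl, mem_singleton]
    intro h0
    have hfix : Function.update x s 0 = x := by rw [← h0, Function.update_eq_self]
    exact hPC (by rw [hfix, sub_self])
  · obtain ⟨i, -, hji⟩ := mem_biUnion.mp hjv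
    exact mem_compl.mpr (L.M_ne_zero_iff.mp (prod_ne_zero_iff.mp hM i (mem_univ i)) j hji)
  · exact mem_univ _

theorem card_deletionBox {s : Fin n} (hs : s ∉ L.layerVars) :
    (Fintype.piFinset (L.deletionBox s)).card =
      Fintype.card F ^ (n - ∑ i, (L.layer i).card - 1) *
        (∏ i, ∏ v ∈ L.layer i, (Fintype.card F - (L.S v).card)) * (Fintype.card F - 1) := by
  rw [Fintype.card_piFinset, ← prod_mul_prod_compl (insert s L.layerVars), prod_insert hs]
  have hcore : ∏ j ∈ (insert s L.layerVars)ᶜ, (L.deletionBox s j).card =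
      Fintype.card F ^ (n - ∑ i, (L.layer i).card - 1) := by
    rw [prod_congr rfl fun j hj => ?_, prod_const, card_compl, card_insert_of_notMem hs,
      card_layerVars, Fintype.card_fin, Nat.sub_add_eq]
    rw [mem_compl, mem_insert, not_or] at hj
    simp [deletionBox, hj.1, hj.2]
  have hlayers : ∏ j ∈ L.layerVars, (L.deletionBox s j).card =
      ∏ i, ∏ v ∈ L.layer i, (Fintype.card F - (L.S v).card) := by
    rw [layerVars, prod_biUnion fun i _ j _ hij => L.disj i j hij]
    refine prod_congr rfl fun i _ => prod_congr rfl fun v hv => ?_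
    have hvD : v ∈ L.layerVars := mem_biUnion.mpr ⟨i, mem_univ i, hv⟩
    have hvs : v ≠ s := ne_of_mem_of_not_mem hvD hs
    simp [deletionBox, hvs, hvD, card_compl]
  have hs0 : (L.deletionBox s s).card = Fintype.card F - 1 := by
    simp [deletionBox, card_compl]
  rw [hcore, hlayers, hs0]
  ring

end LayeredForm

theorem stmt9_general {F : Type*} [Field F] [Fintype F] [DecidableEq F] {n r : ℕ}
    (f : (Fin n → F) → F) (L : LayeredForm F n r) (hf : f = L.eval)
    (s : Fin n) (hsupp : DependsOnVar n L.PC s) :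
    chCount f s 0 ≤
      Fintype.card F ^ (n - (∑ i : Fin r, (L.layer i).card) - 1) *
        (∏ i : Fin r, ∏ v ∈ L.layer i, (Fintype.card F - (L.S v).card)) *
        (Fintype.card F - 1) := by
  subst hf
  have hs := L.notMem_layerVars_of_dependsOnVar hsupp
  calc chCount L.eval s 0 ≤ (Fintype.piFinset (L.deletionBox s)).card :=
        card_le_card (L.changed_subset_deletionBox hs)
    _ = _ := L.card_deletionBox hs

/-- Edge-deletion bound for a variable `s` in the support of a core
function `P_C` that has no canalizing variables. -/
theorem stmt9 {F : Type*} [Field F] [Fintype F] [DecidableEq F] {n r : ℕ}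
    (f : (Fin n → F) → F) (L : LayeredForm F n r) (hf : f = L.eval)
    (hnc : ∀ v : Fin n, DependsOnVar n L.PC v →
      ¬ ∃ (S' : Finset F) (b : F), Canalizing n L.PC v S' b)
    (s : Fin n) (hsupp : DependsOnVar n L.PC s) :
    chCount f s 0 ≤
      Fintype.card F ^ (n - (∑ i : Fin r, (L.layer i).card) - 1) *
        (∏ i : Fin r, ∏ v ∈ L.layer i, (Fintype.card F - (L.S v).card)) *
        (Fintype.card F - 1) :=
  stmt9_general f L hf s hsupp
end

section
/- Let f : F^n → F be of the form f(x) = M · g(x_other) + B, where M = ∏_{j=1}^{k} Q̃_{S_j}(x_{i_j}) is a product of complement indicators over distinct variables x_{i_1}, …, x_{i_k} with nonempty proper sets S_1, …, S_k ⊆ F, g is a function of the remaining n − k variables, and B ∈ F. Let x_s = x_{i_{j_0}} be one of these canalizing variables. If x ∈ F^n satisfies f(x_1, …, x_{s−1}, 0, x_{s+1}, …, x_n) ≠ f(x), then x_{i_j} ∉ S_j for every j ≠ j_0; moreover, if 0 ∈ S_{j_0} then additionally x_s ∉ S_{j_0}, and if 0 ∉ S_{j_0} then additionally x_s ∈ S_{j_0}.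 Consequently #{x ∈ F^n : f(x|x_s ← 0) ≠ f(x)} ≤ p^{n−k} · (∏_{j ≠ j_0} (p − |S_j|)) · (p − R), where R = |S_{j_0}| if 0 ∈ S_{j_0} and R = p − |S_{j_0}| if 0 ∉ S_{j_0}. -/
open Finset

/-!
Replacing `x_s`, `s = i_{j₀}`, by `0` does not change `g`, so `f` can change only where the
product `M` does. A single vanishing factor kills `M`, so at such a state every factor with
`j ≠ j₀` equals `1`, and the factor at `j₀` takes different values at `x_s` and at `0`. Hence
the changed states lie in a box: the coordinate `i_j` ranges over a set `A_j` of size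
`p - |S_j|` (resp. `p - R` for `j = j₀`), and the other `n - k` coordinates are free.
-/

section

variable {F : Type*} [Fintype F] [DecidableEq F]

theorem Qt_eq_of_mem_iff [Zero F] [One F] {S : Finset F} {a b : F} (h : a ∈ S ↔ b ∈ S) :
    Qt S a = Qt S b := by
  simp only [Qt, h]

theorem card_filter_mem_iff_notMem (S : Finset F) (a : F) :
    (univ.filter fun b => (b ∈ S ↔ a ∉ S)).card =
      Fintype.card F - if a ∈ S then S.card else Fintype.card F - S.card := by
  by_cases ha : a ∈ S
  · have hcompl : (univ.filter fun b => (b ∈ S ↔ a ∉ S)) = Sᶜ := by ext; simp [ha]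
    rw [hcompl, Finset.card_compl, if_pos ha]
  · have hS : (univ.filter fun b => (b ∈ S ↔ a ∉ S)) = S := by ext; simp [ha]
    rw [hS, if_neg ha, Nat.sub_sub_self (Finset.card_le_univ S)]

variable {ι κ : Type*} [Fintype κ] [DecidableEq ι] {idx : κ → ι}

theorem notMem_and_mem_iff_of_prod_Qt_update_ne [CommMonoidWithZero F]
    (hinj : Function.Injective idx) (S : κ → Finset F) (x : ι → F) (j₀ : κ) (a : F)
    (h : ∏ j, Qt (S j) (Function.update x (idx j₀) a (idx j)) ≠ ∏ j, Qt (S j) (x (idx j))) :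
    (∀ j, j ≠ j₀ → x (idx j) ∉ S j) ∧ (x (idx j₀) ∈ S j₀ ↔ a ∉ S j₀) := by
  have update_idx_of_ne : ∀ j, j ≠ j₀ → Function.update x (idx j₀) a (idx j) = x (idx j) :=
    fun j hj => Function.update_of_ne (hinj.ne hj) _ _
  refine ⟨fun j hj hmem => h ?_, by_contra fun hiff => h ?_⟩
  · have hzero : Qt (S j) (x (idx j)) = 0 := if_pos hmem
    rw [Finset.prod_eq_zero (Finset.mem_univ j) (by rwa [update_idx_of_ne j hj]),
      Finset.prod_eq_zero (Finset.mem_univ j) hzero]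
  · refine Finset.prod_congr rfl fun j _ => ?_
    by_cases hj : j = j₀
    · subst hj
      rw [Function.update_self]
      exact Qt_eq_of_mem_iff (by tauto)
    · rw [update_idx_of_ne j hj]

theorem notMem_and_mem_iff_of_update_ne [CommSemiring F] (hinj : Function.Injective idx)
    (S : κ → Finset F) (g : (ι → F) → F)
    (hg : ∀ x y : ι → F, (∀ v, (∀ j, idx j ≠ v) → x v = y v) → g x = g y)
    (B : F) {f : (ι → F) → F} (hf : ∀ x, f x = (∏ j, Qt (S j) (x (idx j))) * g x + B)
    (j₀ : κ) (a : F) {x : ι → F} (h : f (Function.update x (idx j₀) a) ≠ f x) :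
    (∀ j, j ≠ j₀ → x (idx j) ∉ S j) ∧ (x (idx j₀) ∈ S j₀ ↔ a ∉ S j₀) := by
  have hg_update : g (Function.update x (idx j₀) a) = g x :=
    hg _ _ fun v hv => Function.update_of_ne (hv j₀).symm _ _
  refine notMem_and_mem_iff_of_prod_Qt_update_ne hinj S x j₀ a fun hprod => h ?_
  rw [hf, hf, hg_update, hprod]

end

theorem card_filter_forall_mem_comp {α ι κ : Type*} [Fintype α] [DecidableEq α]
    [Fintype ι] [DecidableEq ι] [Fintype κ] {idx : κ → ι} (hinj : Function.Injective idx)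
    (A : κ → Finset α) :
    (univ.filter fun x : ι → α => ∀ j, x (idx j) ∈ A j).card =
      Fintype.card α ^ (Fintype.card ι - Fintype.card κ) * ∏ j, (A j).card := by
  set C : ι → Finset α := Function.extend idx A fun _ => univ
  have hC_idx : ∀ j, C (idx j) = A j := fun j => hinj.extend_apply _ _ j
  have hC_compl : ∀ v ∉ univ.image idx, C v = univ := fun v hv =>
    Function.extend_apply' _ _ v fun ⟨j, hj⟩ => hv (Finset.mem_image.2 ⟨j, mem_univ j, hj⟩)
  have hset : (univ.filter fun x : ι → α => ∀ j, x (idx j) ∈ A j) = Fintype.piFinset C := by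
    ext x
    simp only [Finset.mem_filter, Finset.mem_univ, true_and, Fintype.mem_piFinset]
    refine ⟨fun hx v => ?_, fun hx j => hC_idx j ▸ hx (idx j)⟩
    by_cases hv : v ∈ univ.image idx
    · obtain ⟨j, -, rfl⟩ := Finset.mem_image.1 hv
      exact (hC_idx j).symm ▸ hx j
    · exact (hC_compl v hv).symm ▸ Finset.mem_univ _
  rw [hset, Fintype.card_piFinset, ← Finset.prod_mul_prod_compl (univ.image idx), mul_comm,
    Finset.prod_image fun a _ b _ hab => hinj hab,
    Finset.prod_congr rfl fun v hv => by rw [hC_compl v (Finset.mem_compl.1 hv)],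
    Finset.prod_const, Finset.card_compl, Finset.card_image_of_injective _ hinj]
  simp only [hC_idx, Finset.card_univ]

theorem chCount_le {F : Type*} [CommSemiring F] [Fintype F] [DecidableEq F] {n k : ℕ}
    {idx : Fin k → Fin n} (hinj : Function.Injective idx) (S : Fin k → Finset F)
    (g : (Fin n → F) → F)
    (hg : ∀ x y : Fin n → F, (∀ v, (∀ j, idx j ≠ v) → x v = y v) → g x = g y)
    (B : F) {f : (Fin n → F) → F} (hf : ∀ x, f x = (∏ j, Qt (S j) (x (idx j))) * g x + B)
    (j₀ : Fin k) (a : F) :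
    chCount f (idx j₀) a ≤
      Fintype.card F ^ (n - k) * (∏ j ∈ univ.erase j₀, (Fintype.card F - (S j).card)) *
        (Fintype.card F - if a ∈ S j₀ then (S j₀).card else Fintype.card F - (S j₀).card) := by
  set A : Fin k → Finset F :=
    Function.update (fun j => (S j)ᶜ) j₀ (univ.filter fun b => (b ∈ S j₀ ↔ a ∉ S j₀))
  have hsub : (univ.filter fun x : Fin n → F => f (Function.update x (idx j₀) a) ≠ f x) ⊆
      univ.filter fun x : Fin n → F => ∀ j, x (idx j) ∈ A j := by
    intro x hx
    obtain ⟨hothers, hj₀⟩ :=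
      notMem_and_mem_iff_of_update_ne hinj S g hg B hf j₀ a (Finset.mem_filter.1 hx).2
    refine Finset.mem_filter.2 ⟨mem_univ x, fun j => ?_⟩
    by_cases hj : j = j₀
    · subst hj
      simpa [A] using hj₀
    · simpa [A, hj] using hothers j hj
  calc chCount f (idx j₀) a ≤ (univ.filter fun x : Fin n → F => ∀ j, x (idx j) ∈ A j).card :=
        Finset.card_le_card hsub
    _ = Fintype.card F ^ (Fintype.card (Fin n) - Fintype.card (Fin k)) * ∏ j, (A j).card := by
        -- `convert` only reconciles two decidability instances for `∀ j : Fin k`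
        convert card_filter_forall_mem_comp hinj A
    _ = Fintype.card F ^ (n - k) * ((A j₀).card * ∏ j ∈ univ.erase j₀, (A j).card) := by
        rw [Fintype.card_fin, Fintype.card_fin,
          ← Finset.mul_prod_erase univ (fun j => (A j).card) (mem_univ j₀)]
    _ = _ := by
        rw [Finset.prod_congr rfl fun j hj => by
            rw [show A j = (S j)ᶜ from Function.update_of_ne (Finset.ne_of_mem_erase hj) _ _,
              Finset.card_compl],
          show A j₀ = _ from Function.update_self _ _ _, card_filter_mem_iff_notMem]
        ring

theorem stmt16_general {F : Type*} [Field F] [Fintype F] [DecidableEq F] {n k : ℕ}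
    (idx : Fin k → Fin n) (hinj : Function.Injective idx)
    (S : Fin k → Finset F)
    (g : (Fin n → F) → F)
    (hg : ∀ x y : Fin n → F, (∀ v : Fin n, (∀ j : Fin k, idx j ≠ v) → x v = y v) → g x = g y)
    (B : F) (f : (Fin n → F) → F)
    (hf : ∀ x : Fin n → F, f x = (∏ j : Fin k, Qt (S j) (x (idx j))) * g x + B)
    (j0 : Fin k) :
    (∀ x : Fin n → F, f (Function.update x (idx j0) 0) ≠ f x →
      (∀ j : Fin k, j ≠ j0 → x (idx j) ∉ S j) ∧
      ((0 : F) ∈ S j0 → x (idx j0) ∉ S j0) ∧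
      ((0 : F) ∉ S j0 → x (idx j0) ∈ S j0)) ∧
    chCount f (idx j0) 0 ≤
      Fintype.card F ^ (n - k) *
        (∏ j ∈ Finset.univ.erase j0, (Fintype.card F - (S j).card)) *
        (Fintype.card F -
          if (0 : F) ∈ S j0 then (S j0).card else Fintype.card F - (S j0).card) := by
  refine ⟨fun x hx => ?_, chCount_le hinj S g hg B hf j0 0⟩
  obtain ⟨hothers, hj0⟩ := notMem_and_mem_iff_of_update_ne hinj S g hg B hf j0 0 hx
  exact ⟨hothers, fun h0 hmem => hj0.1 hmem h0, hj0.2⟩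

/-- For `f = M · g + B` with `M` a product of complement indicators over
distinct canalizing variables, any state changed by deleting the canalizing variable
`x_{i_{j₀}}` has all other canalizing variables outside their canalizing sets, and
`x_{i_{j₀}}` outside (resp. inside) `S_{j₀}` according to whether `0 ∈ S_{j₀}`;
consequently the stated counting bound holds. -/
theorem stmt16 {F : Type*} [Field F] [Fintype F] [DecidableEq F] {n k : ℕ}
    (idx : Fin k → Fin n) (hinj : Function.Injective idx)
    (S : Fin k → Finset F) (hSne : ∀ j : Fin k, (S j).Nonempty)
    (hSpr : ∀ j : Fin k, S j ≠ Finset.univ)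
    (g : (Fin n → F) → F)
    (hg : ∀ x y : Fin n → F, (∀ v : Fin n, (∀ j : Fin k, idx j ≠ v) → x v = y v) → g x = g y)
    (B : F) (f : (Fin n → F) → F)
    (hf : ∀ x : Fin n → F, f x = (∏ j : Fin k, Qt (S j) (x (idx j))) * g x + B)
    (j0 : Fin k) :
    (∀ x : Fin n → F, f (Function.update x (idx j0) 0) ≠ f x →
      (∀ j : Fin k, j ≠ j0 → x (idx j) ∉ S j) ∧
      ((0 : F) ∈ S j0 → x (idx j0) ∉ S j0) ∧
      ((0 : F) ∉ S j0 → x (idx j0) ∈ S j0)) ∧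
    chCount f (idx j0) 0 ≤
      Fintype.card F ^ (n - k) *
        (∏ j ∈ Finset.univ.erase j0, (Fintype.card F - (S j).card)) *
        (Fintype.card F -
          if (0 : F) ∈ S j0 then (S j0).card else Fintype.card F - (S j0).card) :=
  stmt16_general idx hinj S g hg B f hf j0
end
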